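/- For all ε ∈ (0, 2], sin(√3·ε/2)/ε > (1/ε)·(e^ε − 1)/(e^ε + 1); i.e. sin(√3·ε/2) > tanh(ε/2) for 0 < ε ≤ 2. -/

import Mathlib

open Real

lemma tanh_formula (x : ℝ) : Real.tanh x = (Real.exp (2*x) - 1) / (Real.exp (2*x) + 1) := by
  rw [Real.tanh_eq_sinh_div_cosh, Real.sinh_eq, Real.cosh_eq]
  have h : Real.exp (2*x) = Real.exp x * Real.exp x := by
    rw [← Real.exp_add]; ring_nf
  have hp : (0:ℝ) < Real.exp x := Real.exp_pos x
  have hn : Real.exp (-x) = (Real.exp x)⁻¹ := Real.exp_neg x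
  rw [h, hn]
  have h2 : Real.exp x * Real.exp x + 1 > 0 := by positivity
  field_simp

lemma exp_neg_lb (t : ℝ) (h0 : 0 ≤ t) (h1 : t ≤ 1) :
    1 - t + t^2/2 - t^3/6 + t^4/24 - t^5/100 ≤ Real.exp (-t) := by
  have hb := Real.exp_bound (x := -t) (by rw [abs_neg, abs_of_nonneg h0]; exact h1)
    (n := 5) (by norm_num)
  rw [abs_neg, abs_of_nonneg h0] at hb
  have h2 := (abs_sub_le_iff.mp hb).2
  simp [Finset.sum_range_succ, Nat.factorial] at h2
  nlinarith [h2]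

lemma tanh_lt_self' (x : ℝ) (h0 : 0 < x) (h1 : x ≤ 1/2) : Real.tanh x < x := by
  rw [tanh_formula]
  set u := Real.exp (2*x) with hu
  have hup : (0:ℝ) < u := Real.exp_pos _
  have hinv : Real.exp (-(2*x)) = u⁻¹ := by rw [Real.exp_neg]
  have hlb := exp_neg_lb (2*x) (by linarith) (by linarith)
  rw [hinv] at hlb
  have hP : (1:ℝ) - 2*x + 2*x^2 - (4/3)*x^3 + (2/3)*x^4 - (8/25)*x^5 ≤ u⁻¹ := by
    nlinarith [hlb]
  have hPpos : (0:ℝ) < 1 - 2*x + 2*x^2 - (4/3)*x^3 + (2/3)*x^4 - (8/25)*x^5 := by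
    nlinarith [sq_nonneg x, sq_nonneg (x - 1/2), pow_pos h0 3, pow_pos h0 5]
  have hkey : (1 - x) < (1 - 2*x + 2*x^2 - (4/3)*x^3 + (2/3)*x^4 - (8/25)*x^5) * (1+x) := by
    nlinarith [pow_pos h0 3, pow_pos h0 5,
      mul_pos (pow_pos h0 3) (sub_pos.mpr (lt_of_le_of_lt h1 (by norm_num : (1:ℝ)/2 < 1)))]
  have hux : u * (1 - x) < 1 + x := by
    have h3 : u⁻¹ * (1+x) > 1 - x := lt_of_lt_of_le hkey (by nlinarith [hP])
    have := mul_lt_mul_of_pos_left h3 hup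
    rw [← mul_assoc, mul_inv_cancel₀ (ne_of_gt hup)] at this
    nlinarith [this]
  rw [div_lt_iff₀ (by positivity)]
  nlinarith [hux]

lemma sin_lb' (y : ℝ) (h0 : 0 ≤ y) (h1 : y ≤ 1) : y - y^3/6 - y^4*(5/96) ≤ Real.sin y := by
  have h := Real.sin_bound (x := y) (by rw [abs_of_nonneg h0]; exact h1)
  rw [abs_of_nonneg h0] at h
  have := (abs_sub_le_iff.mp h).2
  nlinarith [mul_nonneg (pow_nonneg h0 4) (sub_nonneg.mpr h1), pow_nonneg h0 4]

lemma cos_lb' (y : ℝ) (h0 : 0 ≤ y) (h1 : y ≤ 1) : 1 - y^2/2 - y^4*(5/96) ≤ Real.cos y := by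
  have h := Real.cos_bound (x := y) (by rw [abs_of_nonneg h0]; exact h1)
  rw [abs_of_nonneg h0] at h
  have := (abs_sub_le_iff.mp h).2
  linarith

lemma exp_three_halves_lt : Real.exp (3/2) < 4.5 := by
  have h1 : Real.exp (3/2) ^ 2 = Real.exp 3 := by
    rw [sq, ← Real.exp_add]; norm_num
  have h2 : Real.exp 3 = Real.exp 1 ^ 3 := by
    rw [← Real.exp_nat_mul]; norm_num
  have h3 := Real.exp_one_lt_d9
  have h4 : (0:ℝ) < Real.exp 1 := Real.exp_pos 1
  have h5 : Real.exp 1 ^ 3 < 2.7182818286 ^ 3 :=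
    pow_lt_pow_left₀ h3 h4.le (by norm_num)
  nlinarith [Real.exp_pos (3/2)]

lemma exp_two_lt : Real.exp 2 < 7.3891 := by
  have h2 : Real.exp 2 = Real.exp 1 ^ 2 := by
    rw [← Real.exp_nat_mul]; norm_num
  have h3 := Real.exp_one_lt_d9
  nlinarith [Real.exp_pos 1]

set_option maxHeartbeats 2000000 in
/-- For all ε ∈ (0, 2], sin(√3·ε/2) > tanh(ε/2); equivalently
sin(√3·ε/2)/ε > (1/ε)·(e^ε − 1)/(e^ε + 1). -/
theorem stmt_12 :
    ∀ ε : ℝ, 0 < ε → ε ≤ 2 →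
      Real.tanh (ε / 2) < Real.sin (Real.sqrt 3 * ε / 2) ∧
      (1 / ε) * ((Real.exp ε - 1) / (Real.exp ε + 1)) <
        Real.sin (Real.sqrt 3 * ε / 2) / ε := by
  intro ε hε hε2
  have hs2 : Real.sqrt 3 ^ 2 = 3 := Real.sq_sqrt (by norm_num)
  have hsl : (1.732:ℝ) < Real.sqrt 3 := by
    rw [show (1.732:ℝ) = Real.sqrt (1.732^2) by rw [Real.sqrt_sq]; norm_num]
    exact Real.sqrt_lt_sqrt (by positivity) (by norm_num)
  have hsu : Real.sqrt 3 < 1.7321 := by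
    rw [show (1.7321:ℝ) = Real.sqrt (1.7321^2) by rw [Real.sqrt_sq]; norm_num]
    exact Real.sqrt_lt_sqrt (by positivity) (by norm_num)
  set s : ℝ := Real.sqrt 3 with hsdef
  set x : ℝ := ε/2 with hxdef
  have hx0 : 0 < x := by rw [hxdef]; linarith
  have hx1 : x ≤ 1 := by rw [hxdef]; linarith
  have hsp : (0:ℝ) < s := by linarith
  have harg : s * ε / 2 = s * x := by rw [hxdef]; ring
  have main : Real.tanh x < Real.sin (s * x) := by
    rcases le_or_gt x (1/2) with hA | hB
    · -- small x : tanh x < x ≤ sin(s x)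
      have h1 := tanh_lt_self' x hx0 hA
      have ha0 : 0 < s*x := mul_pos hsp hx0
      have ha1 : s*x ≤ 1 := by nlinarith
      have h2 := Real.sin_gt_sub_cube ha0
      have hs3 : s^3 = 3*s := by nlinarith
      have hx2 : x^2 ≤ 1/4 := by nlinarith
      have h3 : x ≤ s*x - (s*x)^3/4 := by
        nlinarith [mul_nonneg (mul_pos hsp hx0).le (sub_nonneg.mpr hx2),
          mul_pos hx0 (show (0:ℝ) < s - 1.732 by linarith)]
      nlinarith [pow_pos ha0 3]
    · -- large x : double angle
      have hy_l : (0.866:ℝ) ≤ s * x := by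
        calc (0.866:ℝ) = 1.732 * (1/2) := by norm_num
        _ ≤ s * x := mul_le_mul hsl.le hB.le (by norm_num) hsp.le
      have hy_u : s * x ≤ 1.7321 := by
        calc s * x ≤ 1.7321 * 1 := mul_le_mul hsu.le hx1 hx0.le (by norm_num)
        _ = 1.7321 := by norm_num
      set y : ℝ := s*x/2 with hydef
      have hyl : (0.433:ℝ) ≤ y := by rw [hydef]; linarith
      have hyu : y ≤ 0.86605 := by rw [hydef]; linarith
      have hy0 : (0:ℝ) ≤ y := by linarith
      have hy1 : y ≤ 1 := by linarith
      have hS := sin_lb' y hy0 hy1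
      have hC := cos_lb' y hy0 hy1
      have hsin2 : Real.sin (s*x) = 2 * Real.sin y * Real.cos y := by
        rw [show s*x = 2*y by rw [hydef]; ring, Real.sin_two_mul]
      rw [hsin2, tanh_formula]
      have hEpos : (0:ℝ) < Real.exp (2*x) := Real.exp_pos _
      rcases le_or_gt x (3/4) with hB1 | hB2
      · -- x ∈ (1/2, 3/4]
        have hE : Real.exp (2*x) ≤ Real.exp (3/2) := Real.exp_le_exp.mpr (by linarith)
        have htanh : (Real.exp (2*x) - 1) / (Real.exp (2*x) + 1) < 0.64 := by
          rw [div_lt_iff₀ (by positivity)]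
          nlinarith [exp_three_halves_lt]
        have hyu' : y ≤ 0.64954 := by
          have : s * x ≤ 1.7321 * (3/4) := mul_le_mul hsu.le hB1 hx0.le (by norm_num)
          rw [hydef]; nlinarith
        have hA1 : (0.4176:ℝ) ≤ y - y^3/6 - y^4*(5/96) := by
          nlinarith [mul_nonneg (sub_nonneg.mpr hyl) (sub_nonneg.mpr hyu),
            sq_nonneg (y-0.433), sq_nonneg (y-0.86605), sq_nonneg y]
        have hB1' : (0.7795:ℝ) ≤ 1 - y^2/2 - y^4*(5/96) := by
          nlinarith [sq_nonneg y, mul_nonneg hy0 (sub_nonneg.mpr hyu'), sq_nonneg (y-0.64954)]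
        have hsy : (0.4176:ℝ) ≤ Real.sin y := by linarith
        have hcy : (0.7795:ℝ) ≤ Real.cos y := by linarith
        nlinarith [mul_le_mul hsy hcy (by norm_num) (by linarith : (0:ℝ) ≤ Real.sin y)]
      · -- x ∈ (3/4, 1]
        have hE : Real.exp (2*x) ≤ Real.exp 2 := Real.exp_le_exp.mpr (by linarith)
        have htanh : (Real.exp (2*x) - 1) / (Real.exp (2*x) + 1) < 0.77 := by
          rw [div_lt_iff₀ (by positivity)]
          nlinarith [exp_two_lt]
        have hyl' : (0.6495:ℝ) ≤ y := by
          have : (1.732:ℝ) * (3/4) ≤ s * x := mul_le_mul hsl.le hB2.le (by norm_num) hsp.le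
          rw [hydef]; nlinarith
        rcases le_or_gt y 0.75 with hy75 | hy75
        · have hA1 : (0.5945:ℝ) ≤ y - y^3/6 - y^4*(5/96) := by
            nlinarith [mul_nonneg (sub_nonneg.mpr hyl') (sub_nonneg.mpr hyu),
              sq_nonneg (y-0.6495), sq_nonneg (y-0.86605), sq_nonneg y]
          have hB1' : (0.7022:ℝ) ≤ 1 - y^2/2 - y^4*(5/96) := by
            nlinarith [sq_nonneg y, mul_nonneg hy0 (sub_nonneg.mpr hy75), sq_nonneg (y-0.75)]
          have hsy : (0.5945:ℝ) ≤ Real.sin y := by linarith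
          have hcy : (0.7022:ℝ) ≤ Real.cos y := by linarith
          nlinarith [mul_le_mul hsy hcy (by norm_num) (by linarith : (0:ℝ) ≤ Real.sin y)]
        · have hA1 : (0.663:ℝ) ≤ y - y^3/6 - y^4*(5/96) := by
            nlinarith [mul_nonneg (sub_nonneg.mpr hy75.le) (sub_nonneg.mpr hyu),
              sq_nonneg (y-0.75), sq_nonneg (y-0.86605), sq_nonneg y]
          have hB1' : (0.5956:ℝ) ≤ 1 - y^2/2 - y^4*(5/96) := by
            nlinarith [sq_nonneg y, mul_nonneg hy0 (sub_nonneg.mpr hyu), sq_nonneg (y-0.86605)]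
          have hsy : (0.663:ℝ) ≤ Real.sin y := by linarith
          have hcy : (0.5956:ℝ) ≤ Real.cos y := by linarith
          nlinarith [mul_le_mul hsy hcy (by norm_num) (by linarith : (0:ℝ) ≤ Real.sin y)]
  constructor
  · rw [harg]; exact main
  · have hfe : Real.tanh x = (Real.exp ε - 1)/(Real.exp ε + 1) := by
      rw [tanh_formula, hxdef, show 2*(ε/2) = ε by ring]
    rw [harg, ← hfe, one_div, inv_mul_eq_div]
    exact (div_lt_div_iff_of_pos_right hε).mpr main
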